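/- For the metric g on R^{2k+l} with g(∂x_i,∂x_j) = -2ψ_{ij}(y), g(∂y_a,∂y_b) = C_{ab}, g(∂x_i,∂xbar_i) = 1 (ψ a smooth symmetric-matrix-valued function of y, C constant nondegenerate symmetric), the curvature operator satisfies R(ξ_1,ξ_2)ξ_3 = 0 whenever any ξ_i lies in the span of {∂xbar_1,...,∂xbar_k}, and R(∂y_a, ∂y_b) = 0 for all a, b. -/

import Mathlib

noncomputable section

open Finset in
/-- Partial derivative in the `i`-th coordinate direction. -/
def pd {ι : Type*} [Fintype ι] [DecidableEq ι]
    (i : ι) (f : (ι → ℝ) → ℝ) (p : ι → ℝ) : ℝ :=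
  fderiv ℝ f p (Pi.single i 1)

/-- Christoffel symbols of the second kind `Γ^k_{ij}` of the metric `g`
(with inverse metric `ginv`). -/
def christoffel {ι : Type*} [Fintype ι] [DecidableEq ι]
    (g ginv : (ι → ℝ) → Matrix ι ι ℝ) (k i j : ι) (p : ι → ℝ) : ℝ :=
  (1 / 2) * ∑ l, ginv p k l *
    (pd i (fun q => g q j l) p + pd j (fun q => g q i l) p - pd l (fun q => g q i j) p)

/-- Components of the curvature operator of the Levi-Civita connection:
`R(∂_i,∂_j)∂_k = ∑_l (curvOp g ginv i j k l) ∂_l`. -/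
def curvOp {ι : Type*} [Fintype ι] [DecidableEq ι]
    (g ginv : (ι → ℝ) → Matrix ι ι ℝ) (i j k l : ι) (p : ι → ℝ) : ℝ :=
  pd i (christoffel g ginv l j k) p - pd j (christoffel g ginv l i k) p
    + ∑ m, christoffel g ginv l i m p * christoffel g ginv m j k p
    - ∑ m, christoffel g ginv l j m p * christoffel g ginv m i k p

/-- The curvature operator extended multilinearly to tangent vectors:
component `l` of `R(v,w)u`. -/
def curvVec {ι : Type*} [Fintype ι] [DecidableEq ι]
    (g ginv : (ι → ℝ) → Matrix ι ι ℝ) (p : ι → ℝ) (v w u : ι → ℝ) : ι → ℝ :=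
  fun l => ∑ i, ∑ j, ∑ k, v i * w j * u k * curvOp g ginv i j k l p

/-- The polarized Jacobi operator `J(v,w)u = (1/2){R(u,v)w + R(u,w)v}`. -/
def jacobiVec {ι : Type*} [Fintype ι] [DecidableEq ι]
    (g ginv : (ι → ℝ) → Matrix ι ι ℝ) (p : ι → ℝ) (v w u : ι → ℝ) : ι → ℝ :=
  fun l => (1 / 2) * (curvVec g ginv p u v w l + curvVec g ginv p u w v l)

/-- The Ricci tensor `Ric_{ij} = Tr (z ↦ R(z,∂_i)∂_j)`. -/
def ricci {ι : Type*} [Fintype ι] [DecidableEq ι]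
    (g ginv : (ι → ℝ) → Matrix ι ι ℝ) (i j : ι) (p : ι → ℝ) : ℝ :=
  ∑ m, curvOp g ginv m i j m p

/-- The Ricci operator (Ricci tensor with one index raised by `g`), as a matrix:
`rho(∂_j) = ∑_i (ricciOp p) i j ∂_i`. -/
def ricciOp {ι : Type*} [Fintype ι] [DecidableEq ι]
    (g ginv : (ι → ℝ) → Matrix ι ι ℝ) (p : ι → ℝ) : Matrix ι ι ℝ :=
  fun i j => ∑ m, ginv p i m * ricci g ginv m j p

/-- The (0,4) curvature tensor `R_{ijkl} = g(R(∂_i,∂_j)∂_k, ∂_l)`. -/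
def curv4 {ι : Type*} [Fintype ι] [DecidableEq ι]
    (g ginv : (ι → ℝ) → Matrix ι ι ℝ) (i j k l : ι) (p : ι → ℝ) : ℝ :=
  ∑ m, curvOp g ginv i j k m p * g p m l

/-- The metric of Definition 1.1: coordinates `(x, y, x̄)` indexed by
`Fin k ⊕ (Fin l ⊕ Fin k)`, with `g(∂xᵢ,∂xⱼ) = -2ψᵢⱼ(y)`, `g(∂yₐ,∂y_b) = C_{ab}`,
`g(∂xᵢ,∂x̄ᵢ) = 1`. -/
def gPsi (k l : ℕ) (ψ : (Fin l → ℝ) → Matrix (Fin k) (Fin k) ℝ)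
    (C : Matrix (Fin l) (Fin l) ℝ) (p : (Fin k ⊕ (Fin l ⊕ Fin k)) → ℝ) :
    Matrix (Fin k ⊕ (Fin l ⊕ Fin k)) (Fin k ⊕ (Fin l ⊕ Fin k)) ℝ :=
  fun a b => match a, b with
    | .inl i, .inl j => -2 * ψ (fun c => p (.inr (.inl c))) i j
    | .inr (.inl a), .inr (.inl b) => C a b
    | .inl i, .inr (.inr j) => if i = j then 1 else 0
    | .inr (.inr i), .inl j => if i = j then 1 else 0
    | _, _ => 0

namespace Stmt10Aux

variable {k l : ℕ}

/-- Projection onto the `y` coordinates, as a continuous linear map. -/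
def ycL (k l : ℕ) : ((Fin k ⊕ (Fin l ⊕ Fin k)) → ℝ) →L[ℝ] (Fin l → ℝ) :=
  ContinuousLinearMap.pi fun c => ContinuousLinearMap.proj (Sum.inr (Sum.inl c))

lemma ycL_apply (p : (Fin k ⊕ (Fin l ⊕ Fin k)) → ℝ) (c : Fin l) :
    ycL k l p c = p (Sum.inr (Sum.inl c)) := rfl

lemma ycL_single_x (i : Fin k) : ycL k l (Pi.single (Sum.inl i) 1) = 0 := by
  funext c
  rw [ycL_apply]
  simp [Pi.single_apply]

lemma ycL_single_xb (i : Fin k) : ycL k l (Pi.single (Sum.inr (Sum.inr i)) 1) = 0 := by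
  funext c
  rw [ycL_apply]
  simp [Pi.single_apply]

lemma ycL_single_y (a : Fin l) :
    ycL k l (Pi.single (Sum.inr (Sum.inl a)) 1) = Pi.single a 1 := by
  funext c
  rw [ycL_apply]
  simp [Pi.single_apply]

lemma pd_comp (h : (Fin l → ℝ) → ℝ) (hh : Differentiable ℝ h)
    (e : Fin k ⊕ (Fin l ⊕ Fin k)) (p : (Fin k ⊕ (Fin l ⊕ Fin k)) → ℝ) :
    pd e (fun q => h (ycL k l q)) p = fderiv ℝ h (ycL k l p) (ycL k l (Pi.single e 1)) := by
  have heq : (fun q => h (ycL k l q)) = h ∘ (ycL k l) := rfl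
  rw [pd, heq, fderiv_comp _ (hh _) (ycL k l).differentiableAt,
    ContinuousLinearMap.fderiv]
  rfl

lemma pd_const (c : ℝ) (e : Fin k ⊕ (Fin l ⊕ Fin k)) (p : (Fin k ⊕ (Fin l ⊕ Fin k)) → ℝ) :
    pd e (fun _ => c) p = 0 := by simp [pd]

lemma pd_zero (e : Fin k ⊕ (Fin l ⊕ Fin k)) (p : (Fin k ⊕ (Fin l ⊕ Fin k)) → ℝ) :
    pd e (0 : ((Fin k ⊕ (Fin l ⊕ Fin k)) → ℝ) → ℝ) p = 0 := pd_const 0 e p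


/-- `∂ψᵢⱼ/∂yₐ` as a function of `y`. -/
def Dpsi (ψ : (Fin l → ℝ) → Matrix (Fin k) (Fin k) ℝ) (a : Fin l) (i j : Fin k)
    (y : Fin l → ℝ) : ℝ :=
  fderiv ℝ (fun y => ψ y i j) y (Pi.single a 1)

lemma diff_Dpsi {ψ : (Fin l → ℝ) → Matrix (Fin k) (Fin k) ℝ}
    (hψ : ∀ i j, ContDiff ℝ (⊤ : ℕ∞) fun y => ψ y i j) (a : Fin l) (i j : Fin k) :
    Differentiable ℝ (Dpsi ψ a i j) := by
  have h1 : ContDiff ℝ 1 (fderiv ℝ fun y => ψ y i j) := (hψ i j).fderiv_right (WithTop.coe_le_coe.2 le_top)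
  exact fun y => ((h1.differentiable one_ne_zero) y).clm_apply (differentiableAt_const _)

/-- Symmetry of second derivatives. -/
lemma Dpsi_symm {ψ : (Fin l → ℝ) → Matrix (Fin k) (Fin k) ℝ}
    (hψ : ∀ i j, ContDiff ℝ (⊤ : ℕ∞) fun y => ψ y i j) (a b : Fin l) (i j : Fin k)
    (y : Fin l → ℝ) :
    fderiv ℝ (Dpsi ψ b i j) y (Pi.single a 1) = fderiv ℝ (Dpsi ψ a i j) y (Pi.single b 1) := by
  have hd : ContDiff ℝ 1 (fderiv ℝ fun y => ψ y i j) := (hψ i j).fderiv_right (WithTop.coe_le_coe.2 le_top)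
  have key : ∀ v w : Fin l → ℝ,
      fderiv ℝ (fun z => fderiv ℝ (fun y => ψ y i j) z v) y w
        = fderiv ℝ (fderiv ℝ fun y => ψ y i j) y w v := by
    intro v w
    rw [fderiv_clm_apply ((hd.differentiable one_ne_zero) y) (differentiableAt_const v)]
    simp
  have hsymm : IsSymmSndFDerivAt ℝ (fun y => ψ y i j) y :=
    ((hψ i j).contDiffAt).isSymmSndFDerivAt (by rw [minSmoothness_of_isRCLikeNormedField]; exact WithTop.coe_le_coe.2 le_top)
  rw [show Dpsi ψ b i j = fun z => fderiv ℝ (fun y => ψ y i j) z (Pi.single b 1) from rfl,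
    show Dpsi ψ a i j = fun z => fderiv ℝ (fun y => ψ y i j) z (Pi.single a 1) from rfl,
    key, key]
  exact hsymm _ _

/-- The explicit Christoffel symbols of `gPsi`. -/
def Gam (ψ : (Fin l → ℝ) → Matrix (Fin k) (Fin k) ℝ) (Cinv : Matrix (Fin l) (Fin l) ℝ) :
    (Fin k ⊕ (Fin l ⊕ Fin k)) → (Fin k ⊕ (Fin l ⊕ Fin k)) → (Fin k ⊕ (Fin l ⊕ Fin k)) →
      ((Fin k ⊕ (Fin l ⊕ Fin k)) → ℝ) → ℝ
  | .inr (.inl b), .inl i, .inl j => fun pt => ∑ a, Cinv b a * Dpsi ψ a i j (ycL k l pt)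
  | .inr (.inr t), .inl i, .inr (.inl a) => fun pt => -(Dpsi ψ a i t (ycL k l pt))
  | .inr (.inr t), .inr (.inl a), .inl i => fun pt => -(Dpsi ψ a i t (ycL k l pt))
  | _, _, _ => 0

lemma Gam_lower_xbar (ψ : (Fin l → ℝ) → Matrix (Fin k) (Fin k) ℝ)
    (Cinv : Matrix (Fin l) (Fin l) ℝ) (m i : Fin k ⊕ (Fin l ⊕ Fin k)) (c : Fin k) :
    Gam ψ Cinv m i (Sum.inr (Sum.inr c)) = 0 := by
  rcases m with m|m|m <;> rcases i with i|i|i <;> rfl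

lemma Gam_lower_xbar' (ψ : (Fin l → ℝ) → Matrix (Fin k) (Fin k) ℝ)
    (Cinv : Matrix (Fin l) (Fin l) ℝ) (m j : Fin k ⊕ (Fin l ⊕ Fin k)) (c : Fin k) :
    Gam ψ Cinv m (Sum.inr (Sum.inr c)) j = 0 := by
  rcases m with m|m|m <;> rcases j with j|j|j <;> rfl

lemma Gam_upper_x (ψ : (Fin l → ℝ) → Matrix (Fin k) (Fin k) ℝ)
    (Cinv : Matrix (Fin l) (Fin l) ℝ) (m : Fin k) (i j : Fin k ⊕ (Fin l ⊕ Fin k)) :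
    Gam ψ Cinv (Sum.inl m) i j = 0 := by
  rcases i with i|i|i <;> rcases j with j|j|j <;> rfl

lemma Gam_yy (ψ : (Fin l → ℝ) → Matrix (Fin k) (Fin k) ℝ)
    (Cinv : Matrix (Fin l) (Fin l) ℝ) (m : Fin k ⊕ (Fin l ⊕ Fin k)) (a b : Fin l) :
    Gam ψ Cinv m (Sum.inr (Sum.inl a)) (Sum.inr (Sum.inl b)) = 0 := by
  rcases m with m|m|m <;> rfl


section Ginv

variable {ψ : (Fin l → ℝ) → Matrix (Fin k) (Fin k) ℝ}
  {C Cinv : Matrix (Fin l) (Fin l) ℝ}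
  {ginv : ((Fin k ⊕ (Fin l ⊕ Fin k)) → ℝ) →
    Matrix (Fin k ⊕ (Fin l ⊕ Fin k)) (Fin k ⊕ (Fin l ⊕ Fin k)) ℝ}

/-- Row `x` of the inverse metric. -/
lemma ginv_x (hginv : ∀ p, gPsi k l ψ C p * ginv p = 1 ∧ ginv p * gPsi k l ψ C p = 1)
    (p : (Fin k ⊕ (Fin l ⊕ Fin k)) → ℝ) (i : Fin k) (b : Fin k ⊕ (Fin l ⊕ Fin k)) :
    ginv p (Sum.inl i) b = if (Sum.inr (Sum.inr i) : Fin k ⊕ (Fin l ⊕ Fin k)) = b then 1 else 0 := by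
  have h := congrFun (congrFun (hginv p).1 (Sum.inr (Sum.inr i))) b
  rw [Matrix.mul_apply, Fintype.sum_sum_type, Fintype.sum_sum_type] at h
  simpa [gPsi, Matrix.one_apply, ite_mul, Finset.sum_ite_eq] using h

/-- Column `x` of the inverse metric. -/
lemma ginv_x' (hginv : ∀ p, gPsi k l ψ C p * ginv p = 1 ∧ ginv p * gPsi k l ψ C p = 1)
    (p : (Fin k ⊕ (Fin l ⊕ Fin k)) → ℝ) (a : Fin k ⊕ (Fin l ⊕ Fin k)) (j : Fin k) :
    ginv p a (Sum.inl j) = if a = Sum.inr (Sum.inr j) then 1 else 0 := by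
  have h := congrFun (congrFun (hginv p).2 a) (Sum.inr (Sum.inr j))
  rw [Matrix.mul_apply, Fintype.sum_sum_type, Fintype.sum_sum_type] at h
  simpa [gPsi, Matrix.one_apply, mul_ite, Finset.sum_ite_eq] using h

/-- The `x̄`-`y` entries of the inverse metric vanish. -/
lemma ginv_xbar_y (hginv : ∀ p, gPsi k l ψ C p * ginv p = 1 ∧ ginv p * gPsi k l ψ C p = 1)
    (hC1 : C * Cinv = 1)
    (p : (Fin k ⊕ (Fin l ⊕ Fin k)) → ℝ) (i : Fin k) (a : Fin l) :
    ginv p (Sum.inr (Sum.inr i)) (Sum.inr (Sum.inl a)) = 0 := by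
  have key : ∀ b, (∑ c, ginv p (Sum.inr (Sum.inr i)) (Sum.inr (Sum.inl c)) * C c b) = 0 := by
    intro b
    have h := congrFun (congrFun (hginv p).2 (Sum.inr (Sum.inr i))) (Sum.inr (Sum.inl b))
    rw [Matrix.mul_apply, Fintype.sum_sum_type, Fintype.sum_sum_type] at h
    simpa [gPsi, Matrix.one_apply] using h
  have h2 : ginv p (Sum.inr (Sum.inr i)) (Sum.inr (Sum.inl a))
      = ∑ c, ginv p (Sum.inr (Sum.inr i)) (Sum.inr (Sum.inl c)) * (C * Cinv) c a := by
    rw [hC1]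
    simp [Matrix.one_apply, mul_ite, Finset.sum_ite_eq]
  rw [h2]
  calc (∑ c, ginv p (Sum.inr (Sum.inr i)) (Sum.inr (Sum.inl c)) * (C * Cinv) c a)
      = ∑ c, ∑ b, (ginv p (Sum.inr (Sum.inr i)) (Sum.inr (Sum.inl c)) * C c b) * Cinv b a := by
        simp [Matrix.mul_apply, Finset.mul_sum, mul_assoc]
    _ = ∑ b, (∑ c, ginv p (Sum.inr (Sum.inr i)) (Sum.inr (Sum.inl c)) * C c b) * Cinv b a := by
        rw [Finset.sum_comm]
        simp [Finset.sum_mul]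
    _ = 0 := by simp [key]

/-- The `y`-`y` block of the inverse metric is `C⁻¹`. -/
lemma ginv_yy (hginv : ∀ p, gPsi k l ψ C p * ginv p = 1 ∧ ginv p * gPsi k l ψ C p = 1)
    (hC2 : Cinv * C = 1)
    (p : (Fin k ⊕ (Fin l ⊕ Fin k)) → ℝ) (b a : Fin l) :
    ginv p (Sum.inr (Sum.inl b)) (Sum.inr (Sum.inl a)) = Cinv b a := by
  have key : ∀ e, (∑ c, C e c * ginv p (Sum.inr (Sum.inl c)) (Sum.inr (Sum.inl a)))
      = if (e : Fin l) = a then 1 else 0 := by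
    intro e
    have h := congrFun (congrFun (hginv p).1 (Sum.inr (Sum.inl e))) (Sum.inr (Sum.inl a))
    rw [Matrix.mul_apply, Fintype.sum_sum_type, Fintype.sum_sum_type] at h
    simpa [gPsi, Matrix.one_apply] using h
  calc ginv p (Sum.inr (Sum.inl b)) (Sum.inr (Sum.inl a))
      = ∑ c, (Cinv * C) b c * ginv p (Sum.inr (Sum.inl c)) (Sum.inr (Sum.inl a)) := by
        rw [hC2]
        simp [Matrix.one_apply, ite_mul, Finset.sum_ite_eq]
    _ = ∑ c, ∑ e, Cinv b e * (C e c * ginv p (Sum.inr (Sum.inl c)) (Sum.inr (Sum.inl a))) := by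
        simp [Matrix.mul_apply, Finset.sum_mul, mul_assoc]
    _ = ∑ e, Cinv b e * ∑ c, C e c * ginv p (Sum.inr (Sum.inl c)) (Sum.inr (Sum.inl a)) := by
        rw [Finset.sum_comm]
        simp [Finset.mul_sum]
    _ = Cinv b a := by simp [key, mul_ite, Finset.sum_ite_eq]

end Ginv


section PdG

variable {ψ : (Fin l → ℝ) → Matrix (Fin k) (Fin k) ℝ} {C : Matrix (Fin l) (Fin l) ℝ}

/-- metric entries with first index in `y ⊕ x̄` are constant. -/
lemma pd_g_inr (a0 : Fin l ⊕ Fin k) (b0 : Fin k ⊕ (Fin l ⊕ Fin k))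
    (e : Fin k ⊕ (Fin l ⊕ Fin k)) (p : (Fin k ⊕ (Fin l ⊕ Fin k)) → ℝ) :
    pd e (fun q => gPsi k l ψ C q (Sum.inr a0) b0) p = 0 := by
  rcases a0 with a0|a0 <;> rcases b0 with b0|b0|b0
  · exact pd_const 0 e p
  · exact pd_const (C a0 b0) e p
  · exact pd_const 0 e p
  · exact pd_const (if a0 = b0 then 1 else 0) e p
  · exact pd_const 0 e p
  · exact pd_const 0 e p

lemma pd_g_x_inr (i : Fin k) (b0 : Fin l ⊕ Fin k)
    (e : Fin k ⊕ (Fin l ⊕ Fin k)) (p : (Fin k ⊕ (Fin l ⊕ Fin k)) → ℝ) :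
    pd e (fun q => gPsi k l ψ C q (Sum.inl i) (Sum.inr b0)) p = 0 := by
  rcases b0 with b0|b0
  · exact pd_const 0 e p
  · exact pd_const (if i = b0 then 1 else 0) e p

lemma pd_g_xx (hψ : ∀ i j, ContDiff ℝ (⊤ : ℕ∞) fun y => ψ y i j) (i j : Fin k)
    (e : Fin k ⊕ (Fin l ⊕ Fin k)) (p : (Fin k ⊕ (Fin l ⊕ Fin k)) → ℝ) :
    pd e (fun q => gPsi k l ψ C q (Sum.inl i) (Sum.inl j)) p
      = -2 * fderiv ℝ (fun y => ψ y i j) (ycL k l p) (ycL k l (Pi.single e 1)) := by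
  have hdiff : Differentiable ℝ (fun y : Fin l → ℝ => -2 * ψ y i j) :=
    ((hψ i j).differentiable (by simp)).const_mul _
  have heq : (fun q => gPsi k l ψ C q (Sum.inl i) (Sum.inl j))
      = fun q => (fun y : Fin l → ℝ => -2 * ψ y i j) (ycL k l q) := rfl
  rw [heq, pd_comp _ hdiff]
  rw [fderiv_const_mul ((hψ i j).differentiable (by simp) _)]
  simp

lemma pd_g_xx_x (hψ : ∀ i j, ContDiff ℝ (⊤ : ℕ∞) fun y => ψ y i j) (i j e : Fin k)
    (p : (Fin k ⊕ (Fin l ⊕ Fin k)) → ℝ) :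
    pd (Sum.inl e) (fun q => gPsi k l ψ C q (Sum.inl i) (Sum.inl j)) p = 0 := by
  rw [pd_g_xx hψ, ycL_single_x]
  simp

lemma pd_g_xx_xb (hψ : ∀ i j, ContDiff ℝ (⊤ : ℕ∞) fun y => ψ y i j) (i j e : Fin k)
    (p : (Fin k ⊕ (Fin l ⊕ Fin k)) → ℝ) :
    pd (Sum.inr (Sum.inr e)) (fun q => gPsi k l ψ C q (Sum.inl i) (Sum.inl j)) p = 0 := by
  rw [pd_g_xx hψ, ycL_single_xb]
  simp

lemma pd_g_xx_y (hψ : ∀ i j, ContDiff ℝ (⊤ : ℕ∞) fun y => ψ y i j) (i j : Fin k) (a : Fin l)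
    (p : (Fin k ⊕ (Fin l ⊕ Fin k)) → ℝ) :
    pd (Sum.inr (Sum.inl a)) (fun q => gPsi k l ψ C q (Sum.inl i) (Sum.inl j)) p
      = -2 * Dpsi ψ a i j (ycL k l p) := by
  rw [pd_g_xx hψ, ycL_single_y]
  rfl

end PdG


section Chris

variable {ψ : (Fin l → ℝ) → Matrix (Fin k) (Fin k) ℝ} {C Cinv : Matrix (Fin l) (Fin l) ℝ}
  {ginv : ((Fin k ⊕ (Fin l ⊕ Fin k)) → ℝ) →
    Matrix (Fin k ⊕ (Fin l ⊕ Fin k)) (Fin k ⊕ (Fin l ⊕ Fin k)) ℝ}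

lemma christoffel_eq (hψ : ∀ i j, ContDiff ℝ (⊤ : ℕ∞) fun y => ψ y i j)
    (hginv : ∀ p, gPsi k l ψ C p * ginv p = 1 ∧ ginv p * gPsi k l ψ C p = 1)
    (hC1 : C * Cinv = 1) (hC2 : Cinv * C = 1)
    (m i j : Fin k ⊕ (Fin l ⊕ Fin k)) (p : (Fin k ⊕ (Fin l ⊕ Fin k)) → ℝ) :
    christoffel (gPsi k l ψ C) ginv m i j p = Gam ψ Cinv m i j p := by
  rcases i with i|i|i <;> rcases j with j|j|j
  · -- x x
    rw [christoffel, Fintype.sum_sum_type, Fintype.sum_sum_type]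
    simp only [pd_g_xx_x hψ, pd_g_x_inr, pd_g_xx_y hψ, pd_g_xx_xb hψ, pd_g_inr]
    rcases m with m|b|t
    · simp [ginv_x hginv, Gam_upper_x]
    · show _ = ∑ a, Cinv b a * Dpsi ψ a i j (ycL k l p)
      simp [ginv_yy hginv hC2, Finset.mul_sum]
      exact Finset.sum_congr rfl fun a _ => by ring
    · simp [ginv_xbar_y hginv hC1, ginv_x' hginv]
      rfl
  · -- x y
    rw [christoffel, Fintype.sum_sum_type, Fintype.sum_sum_type]
    simp only [pd_g_xx_x hψ, pd_g_x_inr, pd_g_xx_y hψ, pd_g_xx_xb hψ, pd_g_inr]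
    rcases m with m|b|t
    · simp [ginv_x hginv, Gam_upper_x]
    · simp [ginv_x' hginv]
      rfl
    · show _ = -(Dpsi ψ j i t (ycL k l p))
      simp [ginv_x' hginv, mul_comm, mul_ite, Finset.sum_ite_eq]
  · -- x x̄ : everything vanishes
    rw [christoffel, Fintype.sum_sum_type, Fintype.sum_sum_type]
    simp only [pd_g_xx_x hψ, pd_g_x_inr, pd_g_xx_y hψ, pd_g_xx_xb hψ, pd_g_inr]
    simp [Gam_lower_xbar]
  · -- y x
    rw [christoffel, Fintype.sum_sum_type, Fintype.sum_sum_type]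
    simp only [pd_g_xx_x hψ, pd_g_x_inr, pd_g_xx_y hψ, pd_g_xx_xb hψ, pd_g_inr]
    rcases m with m|b|t
    · simp [ginv_x hginv, Gam_upper_x]
    · simp [ginv_x' hginv]
      rfl
    · show _ = -(Dpsi ψ i j t (ycL k l p))
      simp [ginv_x' hginv, mul_comm, mul_ite, Finset.sum_ite_eq]
  · -- y y
    rw [christoffel, Fintype.sum_sum_type, Fintype.sum_sum_type]
    simp only [pd_g_xx_x hψ, pd_g_x_inr, pd_g_xx_y hψ, pd_g_xx_xb hψ, pd_g_inr]
    simp [Gam_yy]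
  · -- y x̄
    rw [christoffel, Fintype.sum_sum_type, Fintype.sum_sum_type]
    simp only [pd_g_xx_x hψ, pd_g_x_inr, pd_g_xx_y hψ, pd_g_xx_xb hψ, pd_g_inr]
    simp [Gam_lower_xbar]
  · -- x̄ x
    rw [christoffel, Fintype.sum_sum_type, Fintype.sum_sum_type]
    simp only [pd_g_xx_x hψ, pd_g_x_inr, pd_g_xx_y hψ, pd_g_xx_xb hψ, pd_g_inr]
    simp [Gam_lower_xbar']
  · -- x̄ y
    rw [christoffel, Fintype.sum_sum_type, Fintype.sum_sum_type]
    simp only [pd_g_xx_x hψ, pd_g_x_inr, pd_g_xx_y hψ, pd_g_xx_xb hψ, pd_g_inr]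
    simp [Gam_lower_xbar']
  · -- x̄ x̄
    rw [christoffel, Fintype.sum_sum_type, Fintype.sum_sum_type]
    simp only [pd_g_xx_x hψ, pd_g_x_inr, pd_g_xx_y hψ, pd_g_xx_xb hψ, pd_g_inr]
    simp [Gam_lower_xbar]

end Chris


section PdGam

variable {ψ : (Fin l → ℝ) → Matrix (Fin k) (Fin k) ℝ} {Cinv : Matrix (Fin l) (Fin l) ℝ}

lemma diff_GamFun1 (hψ : ∀ i j, ContDiff ℝ (⊤ : ℕ∞) fun y => ψ y i j)
    (b : Fin l) (i j : Fin k) :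
    Differentiable ℝ (fun y => ∑ a, Cinv b a * Dpsi ψ a i j y) :=
  Differentiable.fun_sum fun a _ => (diff_Dpsi hψ a i j).const_mul _

/-- `Γ` is annihilated by `∂/∂x̄`. -/
lemma pd_Gam_xb (hψ : ∀ i j, ContDiff ℝ (⊤ : ℕ∞) fun y => ψ y i j) (e : Fin k)
    (m i j : Fin k ⊕ (Fin l ⊕ Fin k)) (p : (Fin k ⊕ (Fin l ⊕ Fin k)) → ℝ) :
    pd (Sum.inr (Sum.inr e)) (Gam ψ Cinv m i j) p = 0 := by
  rcases m with m|b|t <;> rcases i with i|i|i <;> rcases j with j|j|j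
  case inr.inl.inl.inl =>
    show pd (Sum.inr (Sum.inr e))
      (fun q => (fun y => ∑ a, Cinv b a * Dpsi ψ a i j y) (ycL k l q)) p = 0
    rw [pd_comp _ (diff_GamFun1 hψ b i j), ycL_single_xb, map_zero]
  case inr.inr.inl.inr.inl =>
    show pd (Sum.inr (Sum.inr e)) (fun q => (fun y => -(Dpsi ψ j i t y)) (ycL k l q)) p = 0
    rw [pd_comp _ (diff_Dpsi hψ j i t).fun_neg, ycL_single_xb, map_zero]
  case inr.inr.inr.inl.inl =>
    show pd (Sum.inr (Sum.inr e)) (fun q => (fun y => -(Dpsi ψ i j t y)) (ycL k l q)) p = 0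
    rw [pd_comp _ (diff_Dpsi hψ i j t).fun_neg, ycL_single_xb, map_zero]
  all_goals exact pd_zero _ _

/-- Symmetry of `∂/∂y` derivatives of `Γ` in the two `y` indices. -/
lemma pd_Gam_y_symm (hψ : ∀ i j, ContDiff ℝ (⊤ : ℕ∞) fun y => ψ y i j) (a b : Fin l)
    (t j : Fin k ⊕ (Fin l ⊕ Fin k)) (p : (Fin k ⊕ (Fin l ⊕ Fin k)) → ℝ) :
    pd (Sum.inr (Sum.inl a)) (Gam ψ Cinv t (Sum.inr (Sum.inl b)) j) p
      = pd (Sum.inr (Sum.inl b)) (Gam ψ Cinv t (Sum.inr (Sum.inl a)) j) p := by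
  rcases t with t|t|t <;> rcases j with j|j|j
  case inr.inr.inl =>
    show pd (Sum.inr (Sum.inl a)) (fun q => (fun y => -(Dpsi ψ b j t y)) (ycL k l q)) p
      = pd (Sum.inr (Sum.inl b)) (fun q => (fun y => -(Dpsi ψ a j t y)) (ycL k l q)) p
    rw [pd_comp _ (diff_Dpsi hψ b j t).fun_neg, pd_comp _ (diff_Dpsi hψ a j t).fun_neg,
      ycL_single_y, ycL_single_y,
      fderiv_fun_neg, fderiv_fun_neg]
    simp only [ContinuousLinearMap.neg_apply, neg_inj]
    exact Dpsi_symm hψ a b j t (ycL k l p)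
  all_goals exact (pd_zero _ _).trans (pd_zero _ _).symm

end PdGam


section Curv

variable {ψ : (Fin l → ℝ) → Matrix (Fin k) (Fin k) ℝ} {C Cinv : Matrix (Fin l) (Fin l) ℝ}
  {ginv : ((Fin k ⊕ (Fin l ⊕ Fin k)) → ℝ) →
    Matrix (Fin k ⊕ (Fin l ⊕ Fin k)) (Fin k ⊕ (Fin l ⊕ Fin k)) ℝ}

lemma curvOp_antisymm (g gi : ((Fin k ⊕ (Fin l ⊕ Fin k)) → ℝ) →
      Matrix (Fin k ⊕ (Fin l ⊕ Fin k)) (Fin k ⊕ (Fin l ⊕ Fin k)) ℝ)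
    (i j kk t : Fin k ⊕ (Fin l ⊕ Fin k)) (p : (Fin k ⊕ (Fin l ⊕ Fin k)) → ℝ) :
    curvOp g gi j i kk t p = -curvOp g gi i j kk t p := by
  rw [curvOp, curvOp]
  ring

variable (hψ : ∀ i j, ContDiff ℝ (⊤ : ℕ∞) fun y => ψ y i j)
  (hginv : ∀ p, gPsi k l ψ C p * ginv p = 1 ∧ ginv p * gPsi k l ψ C p = 1)
  (hC1 : C * Cinv = 1) (hC2 : Cinv * C = 1)

include hψ hginv hC1 hC2

lemma curvOp_xbar3 (i j : Fin k ⊕ (Fin l ⊕ Fin k)) (c : Fin k)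
    (t : Fin k ⊕ (Fin l ⊕ Fin k)) (p : (Fin k ⊕ (Fin l ⊕ Fin k)) → ℝ) :
    curvOp (gPsi k l ψ C) ginv i j (Sum.inr (Sum.inr c)) t p = 0 := by
  have hfun : ∀ m i j, christoffel (gPsi k l ψ C) ginv m i j = Gam ψ Cinv m i j :=
    fun m i j => funext fun p => christoffel_eq hψ hginv hC1 hC2 m i j p
  rw [curvOp]
  simp only [hfun, Gam_lower_xbar, pd_zero, Pi.zero_apply, mul_zero,
    Finset.sum_const_zero]
  ring

lemma curvOp_xbar1 (c : Fin k) (j kk : Fin k ⊕ (Fin l ⊕ Fin k))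
    (t : Fin k ⊕ (Fin l ⊕ Fin k)) (p : (Fin k ⊕ (Fin l ⊕ Fin k)) → ℝ) :
    curvOp (gPsi k l ψ C) ginv (Sum.inr (Sum.inr c)) j kk t p = 0 := by
  have hfun : ∀ m i j, christoffel (gPsi k l ψ C) ginv m i j = Gam ψ Cinv m i j :=
    fun m i j => funext fun p => christoffel_eq hψ hginv hC1 hC2 m i j p
  rw [curvOp]
  simp only [hfun, Gam_lower_xbar', pd_zero, Pi.zero_apply, mul_zero, zero_mul,
    Finset.sum_const_zero, pd_Gam_xb hψ]
  ring

lemma curvOp_xbar2 (i : Fin k ⊕ (Fin l ⊕ Fin k)) (c : Fin k)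
    (kk t : Fin k ⊕ (Fin l ⊕ Fin k)) (p : (Fin k ⊕ (Fin l ⊕ Fin k)) → ℝ) :
    curvOp (gPsi k l ψ C) ginv i (Sum.inr (Sum.inr c)) kk t p = 0 := by
  rw [curvOp_antisymm, curvOp_xbar1 hψ hginv hC1 hC2, neg_zero]

lemma curvOp_yy (a b : Fin l) (kk t : Fin k ⊕ (Fin l ⊕ Fin k))
    (p : (Fin k ⊕ (Fin l ⊕ Fin k)) → ℝ) :
    curvOp (gPsi k l ψ C) ginv (Sum.inr (Sum.inl a)) (Sum.inr (Sum.inl b)) kk t p = 0 := by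
  have hfun : ∀ m i j, christoffel (gPsi k l ψ C) ginv m i j = Gam ψ Cinv m i j :=
    fun m i j => funext fun p => christoffel_eq hψ hginv hC1 hC2 m i j p
  rw [curvOp]
  simp only [hfun]
  rw [pd_Gam_y_symm hψ]
  have hs1 : (∑ m, Gam ψ Cinv t (Sum.inr (Sum.inl a)) m p
      * Gam ψ Cinv m (Sum.inr (Sum.inl b)) kk p) = 0 := by
    refine Finset.sum_eq_zero fun m _ => ?_
    rcases m with m|m|m
    · rw [Gam_upper_x]
      simp
    · rw [Gam_yy]
      simp
    · rw [Gam_lower_xbar]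
      simp
  have hs2 : (∑ m, Gam ψ Cinv t (Sum.inr (Sum.inl b)) m p
      * Gam ψ Cinv m (Sum.inr (Sum.inl a)) kk p) = 0 := by
    refine Finset.sum_eq_zero fun m _ => ?_
    rcases m with m|m|m
    · rw [Gam_upper_x]
      simp
    · rw [Gam_yy]
      simp
    · rw [Gam_lower_xbar]
      simp
  rw [hs1, hs2]
  ring

end Curv

/-- Support of elements of the span of the `∂x̄`'s. -/
lemma span_supp {u : (Fin k ⊕ (Fin l ⊕ Fin k)) → ℝ}
    (hu : u ∈ Submodule.span ℝ (Set.range fun i : Fin k =>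
      (Pi.single (Sum.inr (Sum.inr i)) 1 : (Fin k ⊕ (Fin l ⊕ Fin k)) → ℝ)))
    (e : Fin k ⊕ (Fin l ⊕ Fin k)) (he : ∀ c : Fin k, e ≠ Sum.inr (Sum.inr c)) :
    u e = 0 := by
  have hle : Submodule.span ℝ (Set.range fun i : Fin k =>
      (Pi.single (Sum.inr (Sum.inr i)) 1 : (Fin k ⊕ (Fin l ⊕ Fin k)) → ℝ))
      ≤ LinearMap.ker (LinearMap.proj (R := ℝ)
          (φ := fun _ : Fin k ⊕ (Fin l ⊕ Fin k) => ℝ) e) := by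
    refine Submodule.span_le.2 ?_
    rintro _ ⟨i, rfl⟩
    simp only [SetLike.mem_coe, LinearMap.mem_ker, LinearMap.proj_apply]
    exact Pi.single_eq_of_ne (he i) 1
  exact hle hu

lemma curvVec_apply (g gi : ((Fin k ⊕ (Fin l ⊕ Fin k)) → ℝ) →
      Matrix (Fin k ⊕ (Fin l ⊕ Fin k)) (Fin k ⊕ (Fin l ⊕ Fin k)) ℝ)
    (p v w u : (Fin k ⊕ (Fin l ⊕ Fin k)) → ℝ) (t : Fin k ⊕ (Fin l ⊕ Fin k)) :
    curvVec g gi p v w u t = ∑ i, ∑ j, ∑ kk, v i * w j * u kk * curvOp g gi i j kk t p := rfl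

end Stmt10Aux

open Stmt10Aux in
/-- For the metric `gPsi`, the curvature operator satisfies
`R(ξ₁,ξ₂)ξ₃ = 0` whenever one of the `ξᵢ` lies in the span of the `∂x̄`'s, and
`R(∂yₐ,∂y_b) = 0` for all `a, b`. -/
theorem stmt_10 (k l : ℕ) (hk : 1 ≤ k) (hl : 1 ≤ l)
    (ψ : (Fin l → ℝ) → Matrix (Fin k) (Fin k) ℝ)
    (hψsmooth : ∀ i j, ContDiff ℝ (⊤ : ℕ∞) (fun y => ψ y i j))
    (hψsymm : ∀ y i j, ψ y i j = ψ y j i)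
    (C : Matrix (Fin l) (Fin l) ℝ) (hCsymm : C.IsSymm)
    (hCnd : IsUnit C)
    (ginv : ((Fin k ⊕ (Fin l ⊕ Fin k)) → ℝ) →
      Matrix (Fin k ⊕ (Fin l ⊕ Fin k)) (Fin k ⊕ (Fin l ⊕ Fin k)) ℝ)
    (hginv : ∀ p, gPsi k l ψ C p * ginv p = 1 ∧ ginv p * gPsi k l ψ C p = 1) :
    ∀ p : (Fin k ⊕ (Fin l ⊕ Fin k)) → ℝ,
      (∀ v w u : (Fin k ⊕ (Fin l ⊕ Fin k)) → ℝ,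
        (v ∈ Submodule.span ℝ (Set.range fun i : Fin k =>
            (Pi.single (Sum.inr (Sum.inr i)) 1 : (Fin k ⊕ (Fin l ⊕ Fin k)) → ℝ)) ∨
         w ∈ Submodule.span ℝ (Set.range fun i : Fin k =>
            (Pi.single (Sum.inr (Sum.inr i)) 1 : (Fin k ⊕ (Fin l ⊕ Fin k)) → ℝ)) ∨
         u ∈ Submodule.span ℝ (Set.range fun i : Fin k =>
            (Pi.single (Sum.inr (Sum.inr i)) 1 : (Fin k ⊕ (Fin l ⊕ Fin k)) → ℝ))) →
        curvVec (gPsi k l ψ C) ginv p v w u = 0) ∧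
      (∀ (a b : Fin l) (u : (Fin k ⊕ (Fin l ⊕ Fin k)) → ℝ),
        curvVec (gPsi k l ψ C) ginv p
          (Pi.single (Sum.inr (Sum.inl a)) 1) (Pi.single (Sum.inr (Sum.inl b)) 1) u = 0) := by
  have hdet : IsUnit C.det := (Matrix.isUnit_iff_isUnit_det C).1 hCnd
  have hC1 : C * C⁻¹ = 1 := Matrix.mul_nonsing_inv C hdet
  have hC2 : C⁻¹ * C = 1 := Matrix.nonsing_inv_mul C hdet
  intro p
  constructor
  · intro v w u h
    funext t
    rw [curvVec_apply, Pi.zero_apply]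
    rcases h with hv|hw|hu
    · refine Finset.sum_eq_zero fun i _ => Finset.sum_eq_zero fun j _ =>
        Finset.sum_eq_zero fun kk _ => ?_
      rcases i with i|i|i
      · rw [span_supp hv _ (fun c => by simp)]
        ring
      · rw [span_supp hv _ (fun c => by simp)]
        ring
      · rw [curvOp_xbar1 hψsmooth hginv hC1 hC2]
        ring
    · refine Finset.sum_eq_zero fun i _ => Finset.sum_eq_zero fun j _ =>
        Finset.sum_eq_zero fun kk _ => ?_
      rcases j with j|j|j
      · rw [span_supp hw _ (fun c => by simp)]
        ring
      · rw [span_supp hw _ (fun c => by simp)]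
        ring
      · rw [curvOp_xbar2 hψsmooth hginv hC1 hC2]
        ring
    · refine Finset.sum_eq_zero fun i _ => Finset.sum_eq_zero fun j _ =>
        Finset.sum_eq_zero fun kk _ => ?_
      rcases kk with kk|kk|kk
      · rw [span_supp hu _ (fun c => by simp)]
        ring
      · rw [span_supp hu _ (fun c => by simp)]
        ring
      · rw [curvOp_xbar3 hψsmooth hginv hC1 hC2]
        ring
  · intro a b u
    funext t
    rw [curvVec_apply, Pi.zero_apply]
    refine Finset.sum_eq_zero fun i _ => Finset.sum_eq_zero fun j _ =>
      Finset.sum_eq_zero fun kk _ => ?_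
    by_cases hi : i = Sum.inr (Sum.inl a)
    · by_cases hj : j = Sum.inr (Sum.inl b)
      · subst hi hj
        rw [curvOp_yy hψsmooth hginv hC1 hC2]
        ring
      · rw [Pi.single_eq_of_ne hj]
        ring
    · rw [Pi.single_eq_of_ne hi]
      ring
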